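/- Let q be a real number with q > 1 and let l be a half-integer with l ≥ 1. With the notation of the decomposition of the tensor product of the vector representation with the classical type representation T_l of U′_q(so_3) (vectors |l′,m⟩⊗ := α^{(l′)}_{l,m} v₊^{(m−1)} ⊗ |l,m−1⟩ + β^{(l′)}_{l,m} v₃ ⊗ |l,m⟩ + γ^{(l′)}_{l,m} v₋^{(m+1)} ⊗ |l,m+1⟩ with the explicit coefficients α^{(l′)}_{l,m}, β^{(l′)}_{l,m}, γ^{(l′)}_{l,m}), the 3(2l+1) vectors |l′,m⟩⊗ for l′ ∈ {l+1, l, l−1} and m ∈ {−l′, …, l′} form a basis of ℂ³ ⊗ V_l. Consequently T_𝟏 ⊗ T_l ≅ T_{l+1} ⊕ T_l ⊕ T_{l−1}. -/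
import Mathlib
set_option maxHeartbeats 2000000


open TensorProduct

/-- The `q`-number `[a] = (q^a - q^{-a})/(q - q⁻¹)` (real powers of `q`). -/
noncomputable def qn (q a : ℝ) : ℝ := (q ^ a - q ^ (-a)) / (q - q⁻¹)

/-- `d_m = ((q^m + q^{-m})(q^{m+1} + q^{-m-1}))^{-1/2}`. -/
noncomputable def dd (q m : ℝ) : ℝ :=
  ((q ^ m + q ^ (-m)) * (q ^ (m + 1) + q ^ (-(m + 1)))) ^ (-(1 / 2 : ℝ))

/-- `A_{l,m} = d_m ([l-m][l+m+1])^{1/2}`. -/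
noncomputable def AA (q l m : ℝ) : ℝ :=
  dd q m * Real.sqrt (qn q (l - m) * qn q (l + m + 1))

/-- The basis vector of `Fin N → ℂ` with `ℤ`-valued index; out-of-range indices give `0`.
For `T_l` of `U'_q(so_3)` with `l = lam/2`, index `t` corresponds to `|l, m⟩`, `m = t - l`. -/
noncomputable def bz (N : ℕ) (t : ℤ) : Fin N → ℂ :=
  if h : 0 ≤ t ∧ t < N then Pi.single (⟨t.toNat, by omega⟩ : Fin N) 1 else 0

/-- `v₊^{(m)} = -i q^{-1/2+m} v₁ + v₂` in `ℂ³`. -/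
noncomputable def vpc (q m : ℝ) : Fin 3 → ℂ :=
  (-Complex.I * ((q ^ (-(1 / 2 : ℝ) + m) : ℝ) : ℂ)) • (Pi.single 0 1 : Fin 3 → ℂ)
    + (Pi.single 1 1 : Fin 3 → ℂ)

/-- `v₋^{(m)} = i q^{-1/2-m} v₁ + v₂` in `ℂ³`. -/
noncomputable def vmc (q m : ℝ) : Fin 3 → ℂ :=
  (Complex.I * ((q ^ (-(1 / 2 : ℝ) - m) : ℝ) : ℂ)) • (Pi.single 0 1 : Fin 3 → ℂ)
    + (Pi.single 1 1 : Fin 3 → ℂ)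

/-- The Clebsch–Gordan coefficient `α^{(l+δ)}_{l,m}`, `δ ∈ {1, 0, -1}`. -/
noncomputable def cAl (q l m : ℝ) (δ : ℤ) : ℝ :=
  if δ = 1 then q ^ (l - m + 1 / 2) * dd q (m - 1) * Real.sqrt (qn q (l + m) * qn q (l + m + 1))
  else if δ = 0 then
    -q ^ (-m - 1 / 2) * dd q (m - 1) * Real.sqrt (qn q (l + m) * qn q (l - m + 1))
  else if δ = -1 then
    -q ^ (-l - m - 1 / 2) * dd q (m - 1) * Real.sqrt (qn q (l - m) * qn q (l - m + 1))
  else 0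

/-- The Clebsch–Gordan coefficient `β^{(l+δ)}_{l,m}`, `δ ∈ {1, 0, -1}`. -/
noncomputable def cBe (q l m : ℝ) (δ : ℤ) : ℝ :=
  if δ = 1 then Real.sqrt (qn q (l - m + 1) * qn q (l + m + 1))
  else if δ = 0 then qn q m
  else if δ = -1 then Real.sqrt (qn q (l - m) * qn q (l + m))
  else 0

/-- The Clebsch–Gordan coefficient `γ^{(l+δ)}_{l,m}`, `δ ∈ {1, 0, -1}`. -/
noncomputable def cGa (q l m : ℝ) (δ : ℤ) : ℝ :=
  if δ = 1 then -q ^ (l + m + 1 / 2) * dd q m * Real.sqrt (qn q (l - m) * qn q (l - m + 1))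
  else if δ = 0 then -q ^ (m - 1 / 2) * dd q m * Real.sqrt (qn q (l - m) * qn q (l + m + 1))
  else if δ = -1 then q ^ (-l + m - 1 / 2) * dd q m * Real.sqrt (qn q (l + m) * qn q (l + m + 1))
  else 0

/-- The vector `|l', m⟩⊗ = α^{(l')}_{l,m} v₊^{(m-1)} ⊗ |l,m-1⟩ + β^{(l')}_{l,m} v₃ ⊗ |l,m⟩
+ γ^{(l')}_{l,m} v₋^{(m+1)} ⊗ |l,m+1⟩` in `ℂ³ ⊗ V_l`, where `l = lam/2`, `l' = l + δ` and
`m = t - l`. -/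
noncomputable def vecC (q : ℝ) (lam : ℕ) (δ t : ℤ) :
    (Fin 3 → ℂ) ⊗[ℂ] (Fin (lam + 1) → ℂ) :=
  let l : ℝ := (lam : ℝ) / 2
  let m : ℝ := (t : ℝ) - l
  (cAl q l m δ : ℂ) • (vpc q (m - 1) ⊗ₜ[ℂ] bz (lam + 1) (t - 1))
    + (cBe q l m δ : ℂ) • ((Pi.single 2 1 : Fin 3 → ℂ) ⊗ₜ[ℂ] bz (lam + 1) t)
    + (cGa q l m δ : ℂ) • (vmc q (m + 1) ⊗ₜ[ℂ] bz (lam + 1) (t + 1))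

section basic
variable {q : ℝ} (hq : 1 < q)
include hq

lemma q0 : (0:ℝ) < q := lt_trans one_pos hq

lemma qsub_pos : 0 < q - q⁻¹ := by
  have h0 : (0:ℝ) < q := q0 hq
  have : q⁻¹ < 1 := by rw [inv_lt_one_iff₀]; right; exact hq
  linarith

lemma qn_pos {a : ℝ} (ha : 0 < a) : 0 < qn q a := by
  have h0 : (0:ℝ) < q := q0 hq
  have : q ^ (-a) < q ^ a := Real.rpow_lt_rpow_left_iff hq |>.2 (by linarith)
  exact div_pos (by linarith) (qsub_pos hq)

lemma qn_nonneg {a : ℝ} (ha : 0 ≤ a) : 0 ≤ qn q a := by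
  have h0 : (0:ℝ) < q := q0 hq
  have : q ^ (-a) ≤ q ^ a := Real.rpow_le_rpow_left_iff hq |>.2 (by linarith)
  exact div_nonneg (by linarith) (qsub_pos hq).le

lemma dd_pos (m : ℝ) : 0 < dd q m := by
  have h0 : (0:ℝ) < q := q0 hq
  have h1 : 0 < q ^ m := Real.rpow_pos_of_pos h0 m
  have h2 : 0 < q ^ (-m) := Real.rpow_pos_of_pos h0 _
  have h3 : 0 < q ^ (m+1) := Real.rpow_pos_of_pos h0 _
  have h4 : 0 < q ^ (-(m+1)) := Real.rpow_pos_of_pos h0 _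
  exact Real.rpow_pos_of_pos (by nlinarith) _

lemma qn_one : qn q 1 = 1 := by
  have h0 : (0:ℝ) < q := q0 hq
  rw [qn, Real.rpow_one, Real.rpow_neg_one]
  exact div_self (qsub_pos hq).ne'

omit hq in
lemma qn_neg (a : ℝ) : qn q (-a) = - qn q a := by
  rw [qn, qn, neg_neg]; ring

end basic

lemma sqrt3 {x y z : ℝ} (hx : 0 ≤ x) (hy : 0 ≤ y) (hz : 0 ≤ z) :
    Real.sqrt (x*y) * Real.sqrt (z*y) * Real.sqrt (z*x) = x*y*z := by
  rw [← Real.sqrt_mul (by positivity), ← Real.sqrt_mul (by positivity),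
    show x*y*(z*y)*(z*x) = (x*y*z)^2 by ring, Real.sqrt_sq (by positivity)]

lemma sqrt2 {x : ℝ} (hx : 0 ≤ x) : Real.sqrt x * Real.sqrt x = x := Real.mul_self_sqrt hx

section values
variable (q l m : ℝ)
lemma cAl_one : cAl q l m 1 = q ^ (l - m + 1 / 2) * dd q (m - 1) * Real.sqrt (qn q (l + m) * qn q (l + m + 1)) := by norm_num [cAl]
lemma cAl_zero : cAl q l m 0 = -q ^ (-m - 1 / 2) * dd q (m - 1) * Real.sqrt (qn q (l + m) * qn q (l - m + 1)) := by norm_num [cAl]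
lemma cAl_neg : cAl q l m (-1) = -q ^ (-l - m - 1 / 2) * dd q (m - 1) * Real.sqrt (qn q (l - m) * qn q (l - m + 1)) := by norm_num [cAl]
lemma cBe_one : cBe q l m 1 = Real.sqrt (qn q (l - m + 1) * qn q (l + m + 1)) := by norm_num [cBe]
lemma cBe_zero : cBe q l m 0 = qn q m := by norm_num [cBe]
lemma cBe_neg : cBe q l m (-1) = Real.sqrt (qn q (l - m) * qn q (l + m)) := by norm_num [cBe]
lemma cGa_one : cGa q l m 1 = -q ^ (l + m + 1 / 2) * dd q m * Real.sqrt (qn q (l - m) * qn q (l - m + 1)) := by norm_num [cGa]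
lemma cGa_zero : cGa q l m 0 = -q ^ (m - 1 / 2) * dd q m * Real.sqrt (qn q (l - m) * qn q (l + m + 1)) := by norm_num [cGa]
lemma cGa_neg : cGa q l m (-1) = q ^ (-l + m - 1 / 2) * dd q m * Real.sqrt (qn q (l + m) * qn q (l + m + 1)) := by norm_num [cGa]
end values

lemma sqrt3g {u v w r : ℝ} (hu : 0 ≤ u) (hv : 0 ≤ v) (hr : 0 ≤ r) (h : u*v*w = r^2) :
    Real.sqrt u * Real.sqrt v * Real.sqrt w = r := by
  rw [← Real.sqrt_mul hu, ← Real.sqrt_mul (mul_nonneg hu hv), h, Real.sqrt_sq hr]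

lemma det3of {R : Type*} [CommRing R] (a b c d e f g h i : R) :
    Matrix.det !![a,b,c;d,e,f;g,h,i] = a*e*i - a*f*h - b*d*i + b*f*g + c*d*h - c*e*g := by
  rw [Matrix.det_fin_three]
  simp [Matrix.cons_val_zero, Matrix.cons_val_one, Matrix.head_cons]

lemma det3_eq (q l m : ℝ) (hq : 1 < q) (h1 : 0 ≤ l + m) (h2 : 0 ≤ l - m) :
    Matrix.det !![cAl q l m 1, cBe q l m 1, cGa q l m 1;
                  cAl q l m 0, cBe q l m 0, cGa q l m 0;
                  cAl q l m (-1), cBe q l m (-1), cGa q l m (-1)] =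
    dd q (m-1) * dd q m * (q^m + q^(-m)) *
      (q^l * (qn q (l+m) * qn q (l-m) * qn q (l+1))
        + q^(-(l+1)) * (qn q (l+m+1) * qn q (l-m+1) * qn q l)
        + qn q m^2 * qn q (2*l+1)) := by
  have hql : (0:ℝ) < q := q0 hq
  have hA1 : 0 ≤ qn q (l+m) := qn_nonneg hq h1
  have hA2 : 0 ≤ qn q (l+m+1) := qn_nonneg hq (by linarith)
  have hB1 : 0 ≤ qn q (l-m) := qn_nonneg hq h2
  have hB2 : 0 ≤ qn q (l-m+1) := qn_nonneg hq (by linarith)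
  -- power collapses
  have hp1 : q^(l-m+1/2) * q^(-l+m-1/2) = 1 := by
    rw [← Real.rpow_add hql, show (l-m+1/2)+(-l+m-1/2) = (0:ℝ) by ring, Real.rpow_zero]
  have hp2 : q^(l-m+1/2) * q^(m-1/2) = q^l := by
    rw [← Real.rpow_add hql, show (l-m+1/2)+(m-1/2) = l by ring]
  have hp3 : q^(-m-1/2) * q^(-l+m-1/2) = q^(-(l+1)) := by
    rw [← Real.rpow_add hql, show (-m-1/2)+(-l+m-1/2) = -(l+1) by ring]
  have hp4 : q^(m-1/2) * q^(-l-m-1/2) = q^(-(l+1)) := by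
    rw [← Real.rpow_add hql, show (m-1/2)+(-l-m-1/2) = -(l+1) by ring]
  have hp5 : q^(l+m+1/2) * q^(-m-1/2) = q^l := by
    rw [← Real.rpow_add hql, show (l+m+1/2)+(-m-1/2) = l by ring]
  have hp6 : q^(l+m+1/2) * q^(-l-m-1/2) = 1 := by
    rw [← Real.rpow_add hql, show (l+m+1/2)+(-l-m-1/2) = (0:ℝ) by ring, Real.rpow_zero]
  -- sqrt collapses
  have hS1 : Real.sqrt (qn q (l+m) * qn q (l+m+1)) * Real.sqrt (qn q (l+m) * qn q (l+m+1))
      = qn q (l+m) * qn q (l+m+1) := sqrt2 (mul_nonneg hA1 hA2)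
  have hS6 : Real.sqrt (qn q (l-m) * qn q (l-m+1)) * Real.sqrt (qn q (l-m) * qn q (l-m+1))
      = qn q (l-m) * qn q (l-m+1) := sqrt2 (mul_nonneg hB1 hB2)
  have hS2 : Real.sqrt (qn q (l+m) * qn q (l+m+1)) * Real.sqrt (qn q (l-m) * qn q (l+m+1))
      * Real.sqrt (qn q (l-m) * qn q (l+m)) = qn q (l+m) * qn q (l+m+1) * qn q (l-m) :=
    sqrt3g (mul_nonneg hA1 hA2) (mul_nonneg hB1 hA2)
      (by positivity) (by ring)
  have hS3 : Real.sqrt (qn q (l-m+1) * qn q (l+m+1)) * Real.sqrt (qn q (l+m) * qn q (l-m+1))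
      * Real.sqrt (qn q (l+m) * qn q (l+m+1)) = qn q (l+m) * qn q (l+m+1) * qn q (l-m+1) :=
    sqrt3g (mul_nonneg hB2 hA2) (mul_nonneg hA1 hB2)
      (by positivity) (by ring)
  have hS4 : Real.sqrt (qn q (l-m+1) * qn q (l+m+1)) * Real.sqrt (qn q (l-m) * qn q (l+m+1))
      * Real.sqrt (qn q (l-m) * qn q (l-m+1)) = qn q (l+m+1) * qn q (l-m+1) * qn q (l-m) :=
    sqrt3g (mul_nonneg hB2 hA2) (mul_nonneg hB1 hA2)
      (by positivity) (by ring)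
  have hS5 : Real.sqrt (qn q (l-m) * qn q (l-m+1)) * Real.sqrt (qn q (l+m) * qn q (l-m+1))
      * Real.sqrt (qn q (l-m) * qn q (l+m)) = qn q (l-m) * qn q (l-m+1) * qn q (l+m) :=
    sqrt3g (mul_nonneg hB1 hB2) (mul_nonneg hA1 hB2)
      (by positivity) (by ring)
  rw [det3of, cAl_one, cAl_zero, cAl_neg, cBe_one, cBe_zero, cBe_neg, cGa_one, cGa_zero, cGa_neg]
  have T1 : (q ^ (l - m + 1/2) * dd q (m-1) * Real.sqrt (qn q (l+m) * qn q (l+m+1)))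
      * qn q m * (q ^ (-l+m-1/2) * dd q m * Real.sqrt (qn q (l+m) * qn q (l+m+1)))
      = dd q (m-1) * dd q m * (qn q m * (qn q (l+m) * qn q (l+m+1))) := by
    linear_combination (dd q (m-1) * dd q m * qn q m * (q^(l-m+1/2) * q^(-l+m-1/2))) * hS1
      + (dd q (m-1) * dd q m * qn q m * (qn q (l+m) * qn q (l+m+1))) * hp1
  have T2 : (q ^ (l - m + 1/2) * dd q (m-1) * Real.sqrt (qn q (l+m) * qn q (l+m+1)))
      * (-q ^ (m-1/2) * dd q m * Real.sqrt (qn q (l-m) * qn q (l+m+1)))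
      * Real.sqrt (qn q (l-m) * qn q (l+m))
      = -(q^l) * (dd q (m-1) * dd q m) * (qn q (l+m) * qn q (l+m+1) * qn q (l-m)) := by
    linear_combination (-(dd q (m-1) * dd q m) * (q^(l-m+1/2) * q^(m-1/2))) * hS2
      + (-(dd q (m-1) * dd q m) * (qn q (l+m) * qn q (l+m+1) * qn q (l-m))) * hp2
  have T3 : Real.sqrt (qn q (l-m+1) * qn q (l+m+1))
      * (-q ^ (-m-1/2) * dd q (m-1) * Real.sqrt (qn q (l+m) * qn q (l-m+1)))
      * (q ^ (-l+m-1/2) * dd q m * Real.sqrt (qn q (l+m) * qn q (l+m+1)))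
      = -(q^(-(l+1))) * (dd q (m-1) * dd q m) * (qn q (l+m) * qn q (l+m+1) * qn q (l-m+1)) := by
    linear_combination (-(dd q (m-1) * dd q m) * (q^(-m-1/2) * q^(-l+m-1/2))) * hS3
      + (-(dd q (m-1) * dd q m) * (qn q (l+m) * qn q (l+m+1) * qn q (l-m+1))) * hp3
  have T4 : Real.sqrt (qn q (l-m+1) * qn q (l+m+1))
      * (-q ^ (m-1/2) * dd q m * Real.sqrt (qn q (l-m) * qn q (l+m+1)))
      * (-q ^ (-l-m-1/2) * dd q (m-1) * Real.sqrt (qn q (l-m) * qn q (l-m+1)))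
      = q^(-(l+1)) * (dd q (m-1) * dd q m) * (qn q (l+m+1) * qn q (l-m+1) * qn q (l-m)) := by
    linear_combination ((dd q (m-1) * dd q m) * (q^(m-1/2) * q^(-l-m-1/2))) * hS4
      + ((dd q (m-1) * dd q m) * (qn q (l+m+1) * qn q (l-m+1) * qn q (l-m))) * hp4
  have T5 : (-q ^ (l+m+1/2) * dd q m * Real.sqrt (qn q (l-m) * qn q (l-m+1)))
      * (-q ^ (-m-1/2) * dd q (m-1) * Real.sqrt (qn q (l+m) * qn q (l-m+1)))
      * Real.sqrt (qn q (l-m) * qn q (l+m))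
      = q^l * (dd q (m-1) * dd q m) * (qn q (l-m) * qn q (l-m+1) * qn q (l+m)) := by
    linear_combination ((dd q (m-1) * dd q m) * (q^(l+m+1/2) * q^(-m-1/2))) * hS5
      + ((dd q (m-1) * dd q m) * (qn q (l-m) * qn q (l-m+1) * qn q (l+m))) * hp5
  have T6 : (-q ^ (l+m+1/2) * dd q m * Real.sqrt (qn q (l-m) * qn q (l-m+1)))
      * qn q m
      * (-q ^ (-l-m-1/2) * dd q (m-1) * Real.sqrt (qn q (l-m) * qn q (l-m+1)))
      = dd q (m-1) * dd q m * (qn q m * (qn q (l-m) * qn q (l-m+1))) := by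
    linear_combination ((dd q (m-1) * dd q m) * qn q m * (q^(l+m+1/2) * q^(-l-m-1/2))) * hS6
      + ((dd q (m-1) * dd q m) * qn q m * (qn q (l-m) * qn q (l-m+1))) * hp6
  rw [T1, T2, T3, T4, T5, T6]
  have e1 : q ^ (l+m) = q^l * q^m := Real.rpow_add hql l m
  have e2 : q ^ (l+m+1) = q^l * q^m * q := by
    rw [Real.rpow_add hql (l+m) 1, Real.rpow_one, e1]
  have e3 : q ^ (l-m) = q^l * (q^m)⁻¹ := by
    rw [show l-m = l + (-m) by ring, Real.rpow_add hql, Real.rpow_neg hql.le]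
  have e4 : q ^ (l-m+1) = q^l * (q^m)⁻¹ * q := by
    rw [Real.rpow_add hql (l-m) 1, Real.rpow_one, e3]
  have e5 : q ^ (l+1) = q^l * q := by rw [Real.rpow_add hql, Real.rpow_one]
  have e6 : q ^ (2*l+1) = q^l * q^l * q := by
    rw [show 2*l+1 = l+l+1 by ring, Real.rpow_add hql (l+l) 1, Real.rpow_add hql, Real.rpow_one]
  have hqne : q ≠ 0 := hql.ne'
  have hlne : q^l ≠ 0 := (Real.rpow_pos_of_pos hql l).ne'
  have hmne : q^m ≠ 0 := (Real.rpow_pos_of_pos hql m).ne'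
  have hsub : q - q⁻¹ ≠ 0 := (qsub_pos hq).ne'
  simp only [qn, Real.rpow_neg hql.le, e1, e2, e3, e4, e5, e6]
  set R := q - q⁻¹ with hRdef
  field_simp
  ring

lemma sqrtqn_pos {q : ℝ} (hq : 1 < q) {a b : ℝ} (ha : 0 < a) (hb : 0 < b) :
    0 < Real.sqrt (qn q a * qn q b) :=
  Real.sqrt_pos.2 (mul_pos (qn_pos hq ha) (qn_pos hq hb))

lemma qn_neg_of_neg {q : ℝ} (hq : 1 < q) {a : ℝ} (ha : a < 0) : qn q a < 0 := by
  rw [show a = -(-a) by ring, qn_neg]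
  simpa using qn_pos hq (by linarith : (0:ℝ) < -a)

lemma det3_pos (q l m : ℝ) (hq : 1 < q) (h1 : 1 ≤ l + m) (h2 : 1 ≤ l - m) :
    0 < Matrix.det !![cAl q l m 1, cBe q l m 1, cGa q l m 1;
                  cAl q l m 0, cBe q l m 0, cGa q l m 0;
                  cAl q l m (-1), cBe q l m (-1), cGa q l m (-1)] := by
  have hql : (0:ℝ) < q := q0 hq
  rw [det3_eq q l m hq (by linarith) (by linarith)]
  have d1 := dd_pos hq (m-1)
  have d2 := dd_pos hq m
  have p1 : 0 < q^m + q^(-m) :=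
    add_pos (Real.rpow_pos_of_pos hql m) (Real.rpow_pos_of_pos hql _)
  have s1 : 0 < q^l * (qn q (l+m) * qn q (l-m) * qn q (l+1)) :=
    mul_pos (Real.rpow_pos_of_pos hql l)
      (mul_pos (mul_pos (qn_pos hq (by linarith)) (qn_pos hq (by linarith)))
        (qn_pos hq (by linarith)))
  have s2 : 0 < q^(-(l+1)) * (qn q (l+m+1) * qn q (l-m+1) * qn q l) :=
    mul_pos (Real.rpow_pos_of_pos hql _)
      (mul_pos (mul_pos (qn_pos hq (by linarith)) (qn_pos hq (by linarith)))
        (qn_pos hq (by linarith)))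
  have s3 : 0 ≤ qn q m^2 * qn q (2*l+1) :=
    mul_nonneg (sq_nonneg _) (qn_pos hq (by linarith)).le
  have hsum : 0 < q^l * (qn q (l+m) * qn q (l-m) * qn q (l+1))
      + q^(-(l+1)) * (qn q (l+m+1) * qn q (l-m+1) * qn q l)
      + qn q m^2 * qn q (2*l+1) := by linarith
  exact mul_pos (mul_pos (mul_pos d1 d2) p1) hsum

lemma det20_neg (q l m : ℝ) (hq : 1 < q) (hm : m < 0) (h0 : 0 < l + m + 1) (h2 : 0 < l - m) :
    Matrix.det !![cBe q l m 1, cGa q l m 1; cBe q l m 0, cGa q l m 0] < 0 := by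
  have hql : (0:ℝ) < q := q0 hq
  rw [Matrix.det_fin_two_of, cBe_one, cBe_zero, cGa_one, cGa_zero]
  have b1 : 0 < Real.sqrt (qn q (l - m + 1) * qn q (l + m + 1)) :=
    sqrtqn_pos hq (by linarith) h0
  have g0 : -q ^ (m - 1/2) * dd q m * Real.sqrt (qn q (l - m) * qn q (l + m + 1)) < 0 := by
    nlinarith [mul_pos (mul_pos (Real.rpow_pos_of_pos hql (m - 1/2)) (dd_pos hq m))
      (sqrtqn_pos hq (q := q) h2 h0)]
  have g1 : -q ^ (l + m + 1/2) * dd q m * Real.sqrt (qn q (l - m) * qn q (l - m + 1)) < 0 := by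
    nlinarith [mul_pos (mul_pos (Real.rpow_pos_of_pos hql (l + m + 1/2)) (dd_pos hq m))
      (sqrtqn_pos hq (q := q) h2 (by linarith : (0:ℝ) < l - m + 1))]
  have b0 : qn q m < 0 := qn_neg_of_neg hq hm
  nlinarith

lemma det2l_pos (q l m : ℝ) (hq : 1 < q) (hm : 0 < m) (h0 : 0 < l - m + 1) (h1 : 0 < l + m) :
    0 < Matrix.det !![cAl q l m 1, cBe q l m 1; cAl q l m 0, cBe q l m 0] := by
  have hql : (0:ℝ) < q := q0 hq
  rw [Matrix.det_fin_two_of, cAl_one, cAl_zero, cBe_one, cBe_zero]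
  have a1 : 0 < q ^ (l - m + 1/2) * dd q (m-1) * Real.sqrt (qn q (l + m) * qn q (l + m + 1)) :=
    mul_pos (mul_pos (Real.rpow_pos_of_pos hql (l - m + 1/2)) (dd_pos hq (m-1)))
      (sqrtqn_pos hq (q := q) h1 (by linarith : (0:ℝ) < l + m + 1))
  have a0 : -q ^ (-m - 1/2) * dd q (m-1) * Real.sqrt (qn q (l + m) * qn q (l - m + 1)) < 0 := by
    nlinarith [mul_pos (mul_pos (Real.rpow_pos_of_pos hql (-m - 1/2)) (dd_pos hq (m-1)))
      (sqrtqn_pos hq (q := q) h1 h0)]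
  have b1 : 0 < Real.sqrt (qn q (l - m + 1) * qn q (l + m + 1)) :=
    sqrtqn_pos hq h0 (by linarith)
  have b0 : 0 < qn q m := qn_pos hq hm
  nlinarith

lemma cGa1_neg (q l m : ℝ) (hq : 1 < q) (h : 0 < l - m) : cGa q l m 1 < 0 := by
  have hql : (0:ℝ) < q := q0 hq
  rw [cGa_one]
  nlinarith [mul_pos (mul_pos (Real.rpow_pos_of_pos hql (l + m + 1/2)) (dd_pos hq m))
    (sqrtqn_pos hq (q := q) h (by linarith : (0:ℝ) < l - m + 1))]

lemma cAl1_pos (q l m : ℝ) (hq : 1 < q) (h : 0 < l + m) : 0 < cAl q l m 1 := by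
  have hql : (0:ℝ) < q := q0 hq
  rw [cAl_one]
  exact mul_pos (mul_pos (Real.rpow_pos_of_pos hql (l - m + 1/2)) (dd_pos hq (m-1)))
    (sqrtqn_pos hq (q := q) h (by linarith : (0:ℝ) < l + m + 1))

noncomputable def Pv (q : ℝ) (lam : ℕ) (s : ℤ) : (Fin 3 → ℂ) ⊗[ℂ] (Fin (lam+1) → ℂ) :=
  vpc q ((s:ℝ) - (lam:ℝ)/2) ⊗ₜ[ℂ] bz (lam+1) s

noncomputable def Zv (lam : ℕ) (s : ℤ) : (Fin 3 → ℂ) ⊗[ℂ] (Fin (lam+1) → ℂ) :=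
  (Pi.single 2 1 : Fin 3 → ℂ) ⊗ₜ[ℂ] bz (lam+1) s

noncomputable def Mv (q : ℝ) (lam : ℕ) (s : ℤ) : (Fin 3 → ℂ) ⊗[ℂ] (Fin (lam+1) → ℂ) :=
  vmc q ((s:ℝ) - (lam:ℝ)/2) ⊗ₜ[ℂ] bz (lam+1) s

lemma bz_out {N : ℕ} {t : ℤ} (h : t < 0 ∨ (N:ℤ) ≤ t) : bz N t = 0 := by
  rw [bz, dif_neg]; omega

lemma bz_in {N : ℕ} (s : Fin N) : bz N (s : ℤ) = Pi.single s 1 := by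
  have h : (0:ℤ) ≤ (s:ℤ) ∧ ((s:ℤ) : ℤ) < N := ⟨by omega, by exact_mod_cast s.2⟩
  rw [bz, dif_pos h]
  congr

lemma vecC_eq (q : ℝ) (lam : ℕ) (δ t : ℤ) :
    vecC q lam δ t
      = (cAl q ((lam:ℝ)/2) ((t:ℝ) - (lam:ℝ)/2) δ : ℂ) • Pv q lam (t-1)
      + (cBe q ((lam:ℝ)/2) ((t:ℝ) - (lam:ℝ)/2) δ : ℂ) • Zv lam t
      + (cGa q ((lam:ℝ)/2) ((t:ℝ) - (lam:ℝ)/2) δ : ℂ) • Mv q lam (t+1) := by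
  simp only [vecC, Pv, Zv, Mv]
  rw [show (t:ℝ) - (lam:ℝ)/2 - 1 = ((t-1 : ℤ):ℝ) - (lam:ℝ)/2 by push_cast; ring,
    show (t:ℝ) - (lam:ℝ)/2 + 1 = ((t+1 : ℤ):ℝ) - (lam:ℝ)/2 by push_cast; ring]

lemma matrix_span {V : Type*} [AddCommGroup V] [Module ℂ V] {n : ℕ}
    (A : Matrix (Fin n) (Fin n) ℂ) (hA : IsUnit A.det) (u v : Fin n → V)
    (hv : ∀ k, v k = ∑ i, A k i • u i) (Sp : Submodule ℂ V)
    (hmem : ∀ k, v k ∈ Sp) (j : Fin n) : u j ∈ Sp := by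
  have huj : u j = ∑ k, A⁻¹ j k • v k := by
    simp_rw [hv, Finset.smul_sum, smul_smul]
    rw [Finset.sum_comm]
    have h2 : ∀ i ∈ Finset.univ, ∑ k, (A⁻¹ j k * A k i) • u i
        = (if j = i then (1:ℂ) else 0) • u i := by
      intro i _
      rw [← Finset.sum_smul, ← Matrix.mul_apply, Matrix.nonsing_inv_mul A hA,
        Matrix.one_apply]
    rw [Finset.sum_congr rfl h2]
    simp
  rw [huj]
  exact Submodule.sum_mem _ fun k _ => Submodule.smul_mem _ _ (hmem k)

lemma Pv_out {q : ℝ} {lam : ℕ} {s : ℤ} (h : s < 0 ∨ (lam:ℤ)+1 ≤ s) : Pv q lam s = 0 := by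
  rw [Pv, bz_out (by omega : s < 0 ∨ ((lam+1:ℕ):ℤ) ≤ s), tmul_zero]

lemma Zv_out {lam : ℕ} {s : ℤ} (h : s < 0 ∨ (lam:ℤ)+1 ≤ s) : Zv lam s = 0 := by
  rw [Zv, bz_out (by omega : s < 0 ∨ ((lam+1:ℕ):ℤ) ≤ s), tmul_zero]

lemma Mv_out {q : ℝ} {lam : ℕ} {s : ℤ} (h : s < 0 ∨ (lam:ℤ)+1 ≤ s) : Mv q lam s = 0 := by
  rw [Mv, bz_out (by omega : s < 0 ∨ ((lam+1:ℕ):ℤ) ≤ s), tmul_zero]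


/-- **Decomposition of `T_𝟏 ⊗ T_l` for `U'_q(so_3)` (classical type): basis statement.**
For real `q > 1` and a half-integer `l = lam/2 ≥ 1`, the `3(2l+1)` vectors `|l', m⟩⊗`
(`l' = l + δ`, `δ ∈ {1, 0, -1}`, `m = -l', …, l'`, i.e. `-δ ≤ t ≤ lam + δ` with `m = t - l`)
form a basis of `ℂ³ ⊗ V_l`; consequently `T_𝟏 ⊗ T_l ≅ T_{l+1} ⊕ T_l ⊕ T_{l-1}`. -/
theorem stmt_11 (q : ℝ) (hq : 1 < q) (lam : ℕ) (hlam : 2 ≤ lam) :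
    LinearIndependent ℂ
      (fun s : {x : ℤ × ℤ //
          (x.1 = 1 ∨ x.1 = 0 ∨ x.1 = -1) ∧ -x.1 ≤ x.2 ∧ x.2 ≤ (lam : ℤ) + x.1} =>
        vecC q lam s.1.1 s.1.2) ∧
    Submodule.span ℂ (Set.range
      (fun s : {x : ℤ × ℤ //
          (x.1 = 1 ∨ x.1 = 0 ∨ x.1 = -1) ∧ -x.1 ≤ x.2 ∧ x.2 ≤ (lam : ℤ) + x.1} =>
        vecC q lam s.1.1 s.1.2)) = ⊤ := by
  classical
  have hql : (0:ℝ) < q := q0 hq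
  have hl1 : (1:ℝ) ≤ (lam:ℝ)/2 := by
    have : (2:ℝ) ≤ (lam:ℝ) := by exact_mod_cast hlam
    linarith
  set Sp := Submodule.span ℂ (Set.range
      (fun s : {x : ℤ × ℤ //
          (x.1 = 1 ∨ x.1 = 0 ∨ x.1 = -1) ∧ -x.1 ≤ x.2 ∧ x.2 ≤ (lam : ℤ) + x.1} =>
        vecC q lam s.1.1 s.1.2)) with hSp
  have hmem : ∀ δ t : ℤ, (δ = 1 ∨ δ = 0 ∨ δ = -1) → -δ ≤ t → t ≤ (lam:ℤ) + δ →
      vecC q lam δ t ∈ Sp := by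
    intro δ t h1 h2 h3
    exact Submodule.subset_span ⟨⟨(δ,t), h1, h2, h3⟩, rfl⟩
  -- boundary 1×1 blocks
  have hM0 : Mv q lam 0 ∈ Sp := by
    have h1 : vecC q lam 1 (-1)
        = (cGa q ((lam:ℝ)/2) (((-1:ℤ):ℝ) - (lam:ℝ)/2) 1 : ℂ) • Mv q lam (-1+1) := by
      rw [vecC_eq, Pv_out (by omega), Zv_out (by omega), smul_zero, smul_zero, zero_add,
        zero_add]
    have hc : (cGa q ((lam:ℝ)/2) (((-1:ℤ):ℝ) - (lam:ℝ)/2) 1 : ℂ) ≠ 0 := by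
      have := cGa1_neg q ((lam:ℝ)/2) (((-1:ℤ):ℝ) - (lam:ℝ)/2) hq (by push_cast; linarith)
      exact_mod_cast this.ne
    have h2 : Mv q lam 0 = (cGa q ((lam:ℝ)/2) (((-1:ℤ):ℝ) - (lam:ℝ)/2) 1 : ℂ)⁻¹
        • vecC q lam 1 (-1) := by
      rw [h1, smul_smul, inv_mul_cancel₀ hc, one_smul]
      norm_num
    rw [h2]
    exact Submodule.smul_mem _ _ (hmem 1 (-1) (by tauto) (by omega) (by omega))
  have hPlam : Pv q lam (lam:ℤ) ∈ Sp := by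
    have h1 : vecC q lam 1 ((lam:ℤ)+1)
        = (cAl q ((lam:ℝ)/2) ((((lam:ℤ)+1:ℤ):ℝ) - (lam:ℝ)/2) 1 : ℂ)
          • Pv q lam ((lam:ℤ)+1-1) := by
      rw [vecC_eq, Zv_out (by omega), Mv_out (by omega), smul_zero, smul_zero, add_zero,
        add_zero]
    have hc : (cAl q ((lam:ℝ)/2) ((((lam:ℤ)+1:ℤ):ℝ) - (lam:ℝ)/2) 1 : ℂ) ≠ 0 := by
      have := cAl1_pos q ((lam:ℝ)/2) ((((lam:ℤ)+1:ℤ):ℝ) - (lam:ℝ)/2) hq (by push_cast; linarith)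
      exact_mod_cast this.ne'
    have h2 : Pv q lam (lam:ℤ) = (cAl q ((lam:ℝ)/2) ((((lam:ℤ)+1:ℤ):ℝ) - (lam:ℝ)/2) 1 : ℂ)⁻¹
        • vecC q lam 1 ((lam:ℤ)+1) := by
      rw [h1, smul_smul, inv_mul_cancel₀ hc, one_smul]
      norm_num
    rw [h2]
    exact Submodule.smul_mem _ _ (hmem 1 ((lam:ℤ)+1) (by tauto) (by omega) (by omega))
  -- 2×2 block at t = 0
  have hblk0 : Zv lam 0 ∈ Sp ∧ Mv q lam (0+1) ∈ Sp := by
    have hdet : IsUnit (Matrix.det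
        !![(cBe q ((lam:ℝ)/2) (((0:ℤ):ℝ) - (lam:ℝ)/2) 1 : ℂ),
           (cGa q ((lam:ℝ)/2) (((0:ℤ):ℝ) - (lam:ℝ)/2) 1 : ℂ);
           (cBe q ((lam:ℝ)/2) (((0:ℤ):ℝ) - (lam:ℝ)/2) 0 : ℂ),
           (cGa q ((lam:ℝ)/2) (((0:ℤ):ℝ) - (lam:ℝ)/2) 0 : ℂ)]) := by
      rw [isUnit_iff_ne_zero, Matrix.det_fin_two_of]
      have hr := det20_neg q ((lam:ℝ)/2) (((0:ℤ):ℝ) - (lam:ℝ)/2) hq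
        (by push_cast; linarith) (by push_cast; linarith) (by push_cast; linarith)
      rw [Matrix.det_fin_two_of] at hr
      exact_mod_cast hr.ne
    have hv : ∀ k : Fin 2, (![vecC q lam 1 0, vecC q lam 0 0] : Fin 2 → _) k
        = ∑ i, (!![(cBe q ((lam:ℝ)/2) (((0:ℤ):ℝ) - (lam:ℝ)/2) 1 : ℂ),
           (cGa q ((lam:ℝ)/2) (((0:ℤ):ℝ) - (lam:ℝ)/2) 1 : ℂ);
           (cBe q ((lam:ℝ)/2) (((0:ℤ):ℝ) - (lam:ℝ)/2) 0 : ℂ),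
           (cGa q ((lam:ℝ)/2) (((0:ℤ):ℝ) - (lam:ℝ)/2) 0 : ℂ)]) k i
          • (![Zv lam 0, Mv q lam (0+1)] : Fin 2 → _) i := by
      intro k
      fin_cases k
      · show vecC q lam 1 0 = _
        rw [vecC_eq, Pv_out (by omega), smul_zero, zero_add]
        simp [Fin.sum_univ_two]
      · show vecC q lam 0 0 = _
        rw [vecC_eq, Pv_out (by omega), smul_zero, zero_add]
        simp [Fin.sum_univ_two]
    have hvm : ∀ k : Fin 2, (![vecC q lam 1 0, vecC q lam 0 0] : Fin 2 → _) k ∈ Sp := by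
      intro k
      fin_cases k
      · exact hmem 1 0 (by tauto) (by omega) (by omega)
      · exact hmem 0 0 (by tauto) (by omega) (by omega)
    exact ⟨matrix_span _ hdet _ _ hv Sp hvm 0, matrix_span _ hdet _ _ hv Sp hvm 1⟩
  -- 2×2 block at t = lam
  have hblkl : Pv q lam ((lam:ℤ)-1) ∈ Sp ∧ Zv lam (lam:ℤ) ∈ Sp := by
    have hdet : IsUnit (Matrix.det
        !![(cAl q ((lam:ℝ)/2) ((((lam:ℤ)):ℝ) - (lam:ℝ)/2) 1 : ℂ),
           (cBe q ((lam:ℝ)/2) ((((lam:ℤ)):ℝ) - (lam:ℝ)/2) 1 : ℂ);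
           (cAl q ((lam:ℝ)/2) ((((lam:ℤ)):ℝ) - (lam:ℝ)/2) 0 : ℂ),
           (cBe q ((lam:ℝ)/2) ((((lam:ℤ)):ℝ) - (lam:ℝ)/2) 0 : ℂ)]) := by
      rw [isUnit_iff_ne_zero, Matrix.det_fin_two_of]
      have hr := det2l_pos q ((lam:ℝ)/2) ((((lam:ℤ)):ℝ) - (lam:ℝ)/2) hq
        (by push_cast; linarith) (by push_cast; linarith) (by push_cast; linarith)
      rw [Matrix.det_fin_two_of] at hr
      exact_mod_cast hr.ne'
    have hv : ∀ k : Fin 2, (![vecC q lam 1 (lam:ℤ), vecC q lam 0 (lam:ℤ)] : Fin 2 → _) k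
        = ∑ i, (!![(cAl q ((lam:ℝ)/2) ((((lam:ℤ)):ℝ) - (lam:ℝ)/2) 1 : ℂ),
           (cBe q ((lam:ℝ)/2) ((((lam:ℤ)):ℝ) - (lam:ℝ)/2) 1 : ℂ);
           (cAl q ((lam:ℝ)/2) ((((lam:ℤ)):ℝ) - (lam:ℝ)/2) 0 : ℂ),
           (cBe q ((lam:ℝ)/2) ((((lam:ℤ)):ℝ) - (lam:ℝ)/2) 0 : ℂ)]) k i
          • (![Pv q lam ((lam:ℤ)-1), Zv lam (lam:ℤ)] : Fin 2 → _) i := by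
      intro k
      fin_cases k
      · show vecC q lam 1 (lam:ℤ) = _
        rw [vecC_eq, Mv_out (by omega), smul_zero, add_zero]
        simp [Fin.sum_univ_two]
      · show vecC q lam 0 (lam:ℤ) = _
        rw [vecC_eq, Mv_out (by omega), smul_zero, add_zero]
        simp [Fin.sum_univ_two]
    have hvm : ∀ k : Fin 2, (![vecC q lam 1 (lam:ℤ), vecC q lam 0 (lam:ℤ)] : Fin 2 → _) k ∈ Sp := by
      intro k
      fin_cases k
      · exact hmem 1 (lam:ℤ) (by tauto) (by omega) (by omega)
      · exact hmem 0 (lam:ℤ) (by tauto) (by omega) (by omega)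
    exact ⟨matrix_span _ hdet _ _ hv Sp hvm 0, matrix_span _ hdet _ _ hv Sp hvm 1⟩
  -- 3×3 blocks
  have hblk : ∀ t : ℤ, 1 ≤ t → t ≤ (lam:ℤ) - 1 →
      Pv q lam (t-1) ∈ Sp ∧ Zv lam t ∈ Sp ∧ Mv q lam (t+1) ∈ Sp := by
    intro t ht1 ht2
    have htr1 : (1:ℝ) ≤ (t:ℝ) := by exact_mod_cast ht1
    have htr2 : (t:ℝ) ≤ (lam:ℝ) - 1 := by
      have : (t:ℝ) ≤ ((lam:ℤ):ℝ) - 1 := by exact_mod_cast ht2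
      push_cast at this
      linarith
    have hdet : IsUnit (Matrix.det
        !![(cAl q ((lam:ℝ)/2) (((t:ℤ):ℝ) - (lam:ℝ)/2) 1 : ℂ),
           (cBe q ((lam:ℝ)/2) (((t:ℤ):ℝ) - (lam:ℝ)/2) 1 : ℂ),
           (cGa q ((lam:ℝ)/2) (((t:ℤ):ℝ) - (lam:ℝ)/2) 1 : ℂ);
           (cAl q ((lam:ℝ)/2) (((t:ℤ):ℝ) - (lam:ℝ)/2) 0 : ℂ),
           (cBe q ((lam:ℝ)/2) (((t:ℤ):ℝ) - (lam:ℝ)/2) 0 : ℂ),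
           (cGa q ((lam:ℝ)/2) (((t:ℤ):ℝ) - (lam:ℝ)/2) 0 : ℂ);
           (cAl q ((lam:ℝ)/2) (((t:ℤ):ℝ) - (lam:ℝ)/2) (-1) : ℂ),
           (cBe q ((lam:ℝ)/2) (((t:ℤ):ℝ) - (lam:ℝ)/2) (-1) : ℂ),
           (cGa q ((lam:ℝ)/2) (((t:ℤ):ℝ) - (lam:ℝ)/2) (-1) : ℂ)]) := by
      rw [isUnit_iff_ne_zero, det3of]
      have hr := det3_pos q ((lam:ℝ)/2) (((t:ℤ):ℝ) - (lam:ℝ)/2) hq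
        (by push_cast; linarith) (by push_cast; linarith)
      rw [det3of] at hr
      exact_mod_cast hr.ne'
    have hv : ∀ k : Fin 3,
        (![vecC q lam 1 t, vecC q lam 0 t, vecC q lam (-1) t] : Fin 3 → _) k
        = ∑ i, (!![(cAl q ((lam:ℝ)/2) (((t:ℤ):ℝ) - (lam:ℝ)/2) 1 : ℂ),
           (cBe q ((lam:ℝ)/2) (((t:ℤ):ℝ) - (lam:ℝ)/2) 1 : ℂ),
           (cGa q ((lam:ℝ)/2) (((t:ℤ):ℝ) - (lam:ℝ)/2) 1 : ℂ);
           (cAl q ((lam:ℝ)/2) (((t:ℤ):ℝ) - (lam:ℝ)/2) 0 : ℂ),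
           (cBe q ((lam:ℝ)/2) (((t:ℤ):ℝ) - (lam:ℝ)/2) 0 : ℂ),
           (cGa q ((lam:ℝ)/2) (((t:ℤ):ℝ) - (lam:ℝ)/2) 0 : ℂ);
           (cAl q ((lam:ℝ)/2) (((t:ℤ):ℝ) - (lam:ℝ)/2) (-1) : ℂ),
           (cBe q ((lam:ℝ)/2) (((t:ℤ):ℝ) - (lam:ℝ)/2) (-1) : ℂ),
           (cGa q ((lam:ℝ)/2) (((t:ℤ):ℝ) - (lam:ℝ)/2) (-1) : ℂ)]) k i
          • (![Pv q lam (t-1), Zv lam t, Mv q lam (t+1)] : Fin 3 → _) i := by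
      intro k
      fin_cases k
      · show vecC q lam 1 t = _
        rw [vecC_eq]
        simp [Fin.sum_univ_three]
      · show vecC q lam 0 t = _
        rw [vecC_eq]
        simp [Fin.sum_univ_three]
      · show vecC q lam (-1) t = _
        rw [vecC_eq]
        simp [Fin.sum_univ_three]
    have hvm : ∀ k : Fin 3,
        (![vecC q lam 1 t, vecC q lam 0 t, vecC q lam (-1) t] : Fin 3 → _) k ∈ Sp := by
      intro k
      fin_cases k
      · exact hmem 1 t (by tauto) (by omega) (by omega)
      · exact hmem 0 t (by tauto) (by omega) (by omega)
      · exact hmem (-1) t (by tauto) (by omega) (by omega)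
    exact ⟨matrix_span _ hdet _ _ hv Sp hvm 0, matrix_span _ hdet _ _ hv Sp hvm 1,
      matrix_span _ hdet _ _ hv Sp hvm 2⟩
  -- slot membership
  have hZs : ∀ s : ℤ, 0 ≤ s → s ≤ (lam:ℤ) → Zv lam s ∈ Sp := by
    intro s h1 h2
    by_cases hs0 : s = 0
    · subst hs0; exact hblk0.1
    by_cases hsl : s = (lam:ℤ)
    · subst hsl; exact hblkl.2
    · exact (hblk s (by omega) (by omega)).2.1
  have hPs : ∀ s : ℤ, 0 ≤ s → s ≤ (lam:ℤ) → Pv q lam s ∈ Sp := by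
    intro s h1 h2
    by_cases hsl : s = (lam:ℤ)
    · subst hsl; exact hPlam
    by_cases hsl1 : s = (lam:ℤ) - 1
    · subst hsl1; exact hblkl.1
    · have h := (hblk (s+1) (by omega) (by omega)).1
      simpa using h
  have hMs : ∀ s : ℤ, 0 ≤ s → s ≤ (lam:ℤ) → Mv q lam s ∈ Sp := by
    intro s h1 h2
    by_cases hs0 : s = 0
    · subst hs0; exact hM0
    by_cases hs1 : s = 1
    · subst hs1; simpa using hblk0.2
    · have h := (hblk (s-1) (by omega) (by omega)).2.2
      simpa using h
  -- spanning
  have htop : ⊤ ≤ Sp := by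
    rw [← ((Pi.basisFun ℂ (Fin 3)).tensorProduct (Pi.basisFun ℂ (Fin (lam+1)))).span_eq]
    apply Submodule.span_le.2
    rintro _ ⟨⟨i, s⟩, rfl⟩
    rw [Module.Basis.tensorProduct_apply, Pi.basisFun_apply, Pi.basisFun_apply]
    have hs1 : (0:ℤ) ≤ (s:ℤ) := by omega
    have hs2 : ((s:ℤ):ℤ) ≤ (lam:ℤ) := by
      have := s.2
      omega
    have hbz : (Pi.single s 1 : Fin (lam+1) → ℂ) = bz (lam+1) (s:ℤ) := (bz_in s).symm
    have hP := hPs (s:ℤ) hs1 hs2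
    have hM := hMs (s:ℤ) hs1 hs2
    have hZ := hZs (s:ℤ) hs1 hs2
    -- e₀ ⊗ b ∈ Sp
    set c1 : ℝ := q ^ (-(1 / 2 : ℝ) + (((s:ℤ):ℝ) - (lam:ℝ)/2)) with hc1
    set c2 : ℝ := q ^ (-(1 / 2 : ℝ) - (((s:ℤ):ℝ) - (lam:ℝ)/2)) with hc2
    have hc1p : 0 < c1 := Real.rpow_pos_of_pos hql _
    have hc2p : 0 < c2 := Real.rpow_pos_of_pos hql _
    have hsub : Pv q lam (s:ℤ) - Mv q lam (s:ℤ)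
        = ((-Complex.I * (c1:ℂ)) - Complex.I * (c2:ℂ))
          • ((Pi.single 0 1 : Fin 3 → ℂ) ⊗ₜ[ℂ] bz (lam+1) (s:ℤ)) := by
      rw [Pv, Mv, vpc, vmc, ← sub_tmul, smul_tmul']
      congr 1
      rw [← hc1, ← hc2]
      module
    have hcne : ((-Complex.I * (c1:ℂ)) - Complex.I * (c2:ℂ)) ≠ 0 := by
      have : ((-Complex.I * (c1:ℂ)) - Complex.I * (c2:ℂ))
          = -(((c1 + c2 : ℝ):ℂ)) * Complex.I := by push_cast; ring
      rw [this]
      apply mul_ne_zero _ Complex.I_ne_zero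
      simp only [ne_eq, neg_eq_zero, Complex.ofReal_eq_zero]
      linarith
    have he0 : (Pi.single 0 1 : Fin 3 → ℂ) ⊗ₜ[ℂ] bz (lam+1) (s:ℤ) ∈ Sp := by
      have h := Submodule.sub_mem Sp hP hM
      rw [hsub] at h
      have h2 := Submodule.smul_mem Sp ((-Complex.I * (c1:ℂ)) - Complex.I * (c2:ℂ))⁻¹ h
      rwa [smul_smul, inv_mul_cancel₀ hcne, one_smul] at h2
    have he1 : (Pi.single 1 1 : Fin 3 → ℂ) ⊗ₜ[ℂ] bz (lam+1) (s:ℤ) ∈ Sp := by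
      have hMv : Mv q lam (s:ℤ) = (Complex.I * (c2:ℂ))
            • ((Pi.single 0 1 : Fin 3 → ℂ) ⊗ₜ[ℂ] bz (lam+1) (s:ℤ))
          + (Pi.single 1 1 : Fin 3 → ℂ) ⊗ₜ[ℂ] bz (lam+1) (s:ℤ) := by
        rw [Mv, vmc, add_tmul, smul_tmul', ← hc2]
      have h := Submodule.sub_mem Sp hM
        (Submodule.smul_mem Sp (Complex.I * (c2:ℂ)) he0)
      rw [hMv] at h
      simpa using h
    fin_cases i
    · exact hbz ▸ he0
    · exact hbz ▸ he1
    · exact hbz ▸ (show (Pi.single 2 1 : Fin 3 → ℂ) ⊗ₜ[ℂ] bz (lam+1) (s:ℤ) ∈ Sp from hZ)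
  -- cardinality
  have hF : ∀ x : ℤ × ℤ, x ∈ (({1,0,-1} : Finset ℤ).biUnion
      (fun δ => {δ} ×ˢ Finset.Icc (-δ) ((lam:ℤ)+δ)))
      ↔ ((x.1 = 1 ∨ x.1 = 0 ∨ x.1 = -1) ∧ -x.1 ≤ x.2 ∧ x.2 ≤ (lam : ℤ) + x.1) := by
    intro x
    simp only [Finset.mem_biUnion, Finset.mem_insert, Finset.mem_singleton,
      Finset.mem_product, Finset.mem_Icc]
    constructor
    · rintro ⟨δ, hδ, h1, h2, h3⟩
      subst h1
      exact ⟨hδ, h2, h3⟩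
    · rintro ⟨h1, h2, h3⟩
      exact ⟨x.1, h1, rfl, h2, h3⟩
  haveI instF : Fintype {x : ℤ × ℤ //
      (x.1 = 1 ∨ x.1 = 0 ∨ x.1 = -1) ∧ -x.1 ≤ x.2 ∧ x.2 ≤ (lam : ℤ) + x.1} :=
    Fintype.subtype _ hF
  have hcard : Fintype.card {x : ℤ × ℤ //
      (x.1 = 1 ∨ x.1 = 0 ∨ x.1 = -1) ∧ -x.1 ≤ x.2 ∧ x.2 ≤ (lam : ℤ) + x.1}
      = 3 * (lam + 1) := by
    rw [Fintype.card_of_subtype _ hF]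
    rw [Finset.card_biUnion]
    · rw [show ({1,0,-1} : Finset ℤ) = insert 1 (insert 0 {-1}) from rfl,
        Finset.sum_insert (by decide), Finset.sum_insert (by decide),
        Finset.sum_singleton]
      simp only [Finset.card_product, Finset.card_singleton, Int.card_Icc, one_mul]
      omega
    · intro a ha b hb hab
      simp only [Finset.disjoint_left, Finset.mem_product, Finset.mem_singleton]
      rintro ⟨x1, x2⟩ ⟨h1, -⟩ ⟨h2, -⟩
      exact hab (h1 ▸ h2 ▸ rfl)
  have hrank : Module.finrank ℂ ((Fin 3 → ℂ) ⊗[ℂ] (Fin (lam+1) → ℂ)) = 3 * (lam + 1) := by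
    rw [Module.finrank_tensorProduct]
    simp
  constructor
  · exact linearIndependent_of_top_le_span_of_card_eq_finrank htop
      (by rw [hcard, hrank])
  · exact top_le_iff.mp htop
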